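/- arXiv:2009.09268 — 2 statements merged into one kernel-verified Lean document; each statement's English description precedes it below -/
import Mathlib

section
/- For every n ≥ 4 there exist c ∈ F_{2^n} with c ≠ 0, c ≠ 1, and a, b ∈ F_{2^n} such that the c-DDT entry of the (0,1)-swapped inverse function satisfies Δ_c(a,b) = 4; that is, the upper bound 4 on the c-differential uniformity of G is attained. -/
/-! With `b = (a + 1)⁻¹` and `c = (a (a + 1))⁻¹`, both `x = 0` and `x = 1` solve
`G(x + a) + c G(x) = b`, and after clearing denominators every other solution is a root of the
palindromic quadratic `a x² + (a + 1) x + a`, whose roots are `r` and `r⁻¹`. Taking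
`a = r / (r² + r + 1)` makes `r` a root; for the four solutions `0, 1, r, r⁻¹` to be distinct
and `x = a, a + 1` not to be solutions, `r` only has to avoid the zeros of a polynomial of
degree 14, which is possible as soon as `2 ^ n ≥ 16`. -/

open Finset

/-- The (0,1)-swapped inverse function on a field of characteristic 2 with `2^n` elements:
`G(x) = x^(2^n-2) + x^(2^n-1) + (x+1)^(2^n-1)`. -/
def swappedInv {F : Type*} [Field F] (n : ℕ) (x : F) : F :=
  x ^ (2 ^ n - 2) + x ^ (2 ^ n - 1) + (x + 1) ^ (2 ^ n - 1)

/-- The `c`-DDT entry of the swapped inverse function at `(a, b)`: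
the number of `x` with `G(x+a) + c·G(x) = b`. -/
def cDDT (F : Type*) [Field F] [Fintype F] [DecidableEq F] (n : ℕ) (c a b : F) : ℕ :=
  (univ.filter (fun x : F => swappedInv n (x + a) + c * swappedInv n x = b)).card

/-- The `c`-BCT entry of the swapped inverse function at `(a, b)`:
the number of pairs `(x, γ)` with `G(x+γ) + c·G(x) = b` and `G(x+γ+a) + c⁻¹·G(x+a) = b`. -/
def cBCT (F : Type*) [Field F] [Fintype F] [DecidableEq F] (n : ℕ) (c a b : F) : ℕ :=
  (univ.filter (fun p : F × F =>
    swappedInv n (p.1 + p.2) + c * swappedInv n p.1 = b ∧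
    swappedInv n (p.1 + p.2 + a) + c⁻¹ * swappedInv n (p.1 + a) = b)).card

/-- The absolute trace map on a field with `2^n` elements: `Tr(x) = ∑_{i=0}^{n-1} x^(2^i)`. -/
def trF {F : Type*} [Field F] (n : ℕ) (x : F) : F :=
  ∑ i ∈ Finset.range n, x ^ (2 ^ i)

theorem charP_two_of_card_eq_two_pow {F : Type*} [Field F] [Fintype F] {n : ℕ} (hn : n ≠ 0)
    (hF : Fintype.card F = 2 ^ n) : CharP F 2 :=
  ringChar.of_eq <| FiniteField.even_card_iff_char_two.mpr <| by
    rw [hF, Nat.pow_mod, Nat.mod_self, zero_pow hn, Nat.zero_mod]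

theorem swappedInv_zero {F : Type*} [Field F] {n : ℕ} (hn : 2 ≤ n) :
    swappedInv n (0 : F) = 1 := by
  have : 4 ≤ 2 ^ n := by simpa using Nat.pow_le_pow_right two_pos hn
  simp [swappedInv, show 2 ^ n - 2 ≠ 0 by omega, show 2 ^ n - 1 ≠ 0 by omega]

section CharTwo

variable {F : Type*} [Field F] [CharP F 2]

theorem swappedInv_one {n : ℕ} (hn : n ≠ 0) : swappedInv n (1 : F) = 0 := by
  have : 2 ≤ 2 ^ n := Nat.le_self_pow hn 2
  simp [swappedInv, CharTwo.add_self_eq_zero, show 2 ^ n - 1 ≠ 0 by omega]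

theorem swappedInv_of_ne_zero_of_ne_one [Fintype F] {n : ℕ} (hF : Fintype.card F = 2 ^ n)
    {x : F} (hx0 : x ≠ 0) (hx1 : x ≠ 1) : swappedInv n x = x⁻¹ := by
  have hx1' : x + 1 ≠ 0 := by rwa [Ne, CharTwo.add_eq_zero]
  have hcard : 2 ≤ 2 ^ n := hF ▸ Fintype.one_lt_card
  have hpow : x ^ (2 ^ n - 2) = x⁻¹ := eq_inv_of_mul_eq_one_left <| by
    rw [← pow_succ, show 2 ^ n - 2 + 1 = 2 ^ n - 1 by omega, ← hF,
      FiniteField.pow_card_sub_one_eq_one x hx0]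
  rw [swappedInv, hpow, ← hF, FiniteField.pow_card_sub_one_eq_one x hx0,
    FiniteField.pow_card_sub_one_eq_one _ hx1', add_assoc, CharTwo.add_self_eq_zero, add_zero]

theorem inv_add_mul_inv_eq_iff {a x : F} (ha0 : a ≠ 0) (ha1 : a + 1 ≠ 0) (hx0 : x ≠ 0)
    (hxa : x + a ≠ 0) :
    (x + a)⁻¹ + (a * (a + 1))⁻¹ * x⁻¹ = (a + 1)⁻¹ ↔ a * x ^ 2 + (a + 1) * x + a = 0 := by
  have key : (x + a)⁻¹ + (a * (a + 1))⁻¹ * x⁻¹ + (a + 1)⁻¹ =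
      (a * x ^ 2 + (a + 1) * x + a) / (a * (a + 1) * x * (x + a)) := by
    field_simp
    ring_nf
    reduce_mod_char!
  rw [← CharTwo.add_eq_zero, key, div_eq_zero_iff, or_iff_left (by positivity)]

theorem pow_three_add_one_eq_mul (a : F) : a ^ 3 + 1 = (a + 1) * (a ^ 2 + a + 1) := by
  ring_nf
  reduce_mod_char!

theorem inv_mul_add_one_ne_one {a : F} (ha3 : a ^ 3 + 1 ≠ 0) : (a * (a + 1))⁻¹ ≠ 1 := by
  rw [Ne, inv_eq_one]
  intro h
  exact right_ne_zero_of_mul (pow_three_add_one_eq_mul a ▸ ha3) <| by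
    linear_combination h + CharTwo.two_eq_zero (R := F)

theorem swappedInv_add_add_mul_swappedInv_eq_iff [Fintype F] {n : ℕ}
    (hF : Fintype.card F = 2 ^ n) (hn : 2 ≤ n) {a : F} (ha0 : a ≠ 0) (ha3 : a ^ 3 + 1 ≠ 0)
    (ha3' : a ^ 3 + a ^ 2 + 1 ≠ 0) (x : F) :
    swappedInv n (x + a) + (a * (a + 1))⁻¹ * swappedInv n x = (a + 1)⁻¹ ↔
      x * (x + 1) * (a * x ^ 2 + (a + 1) * x + a) = 0 := by
  have ha1 : a + 1 ≠ 0 := left_ne_zero_of_mul (pow_three_add_one_eq_mul a ▸ ha3)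
  have hG : ∀ {y : F}, y ≠ 0 → y + 1 ≠ 0 → swappedInv n y = y⁻¹ := fun hy0 hy1 ↦
    swappedInv_of_ne_zero_of_ne_one hF hy0 (by rwa [Ne, ← CharTwo.add_eq_zero])
  by_cases hx0 : x = 0
  · subst hx0
    refine iff_of_true ?_ (by simp)
    rw [zero_add, swappedInv_zero hn, hG ha0 ha1]
    field_simp; ring_nf; reduce_mod_char!
  by_cases hx1 : x + 1 = 0
  · rw [CharTwo.add_eq_zero] at hx1
    subst hx1
    refine iff_of_true ?_ (by simp [CharTwo.add_self_eq_zero])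
    rw [swappedInv_one (by omega), mul_zero, add_zero, add_comm,
      hG ha1 (by simpa [add_assoc, CharTwo.add_self_eq_zero])]
  by_cases hxa : x = a
  · subst hxa
    refine iff_of_false ?_ ?_
    · rw [CharTwo.add_self_eq_zero, swappedInv_zero hn, hG ha0 ha1, ← CharTwo.add_eq_zero,
        show 1 + (x * (x + 1))⁻¹ * x⁻¹ + (x + 1)⁻¹ = (x ^ 3 + 1) / (x ^ 2 * (x + 1)) by
          field_simp; ring_nf; reduce_mod_char!]
      exact div_ne_zero ha3 (by positivity)
    · rw [show x * (x + 1) * (x * x ^ 2 + (x + 1) * x + x) = x ^ 3 * (x + 1) ^ 2 by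
        ring_nf; reduce_mod_char!]
      positivity
  by_cases hxa1 : x = a + 1
  · subst hxa1
    refine iff_of_false ?_ ?_
    · rw [add_right_comm, CharTwo.add_self_eq_zero, zero_add, swappedInv_one (by omega),
        hG ha1 (by simpa [add_assoc, CharTwo.add_self_eq_zero]), zero_add, ← CharTwo.add_eq_zero,
        show (a * (a + 1))⁻¹ * (a + 1)⁻¹ + (a + 1)⁻¹ = (a ^ 3 + 1) / (a * (a + 1) ^ 3) by
          field_simp; ring_nf; reduce_mod_char!]
      exact div_ne_zero ha3 (by positivity)
    · rw [show (a + 1) * (a + 1 + 1) * (a * (a + 1) ^ 2 + (a + 1) * (a + 1) + a) =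
          a * (a + 1) * (a ^ 3 + a ^ 2 + 1) by ring_nf; reduce_mod_char!]
      positivity
  have hxa0 : x + a ≠ 0 := by rwa [Ne, CharTwo.add_eq_zero]
  have hxa1 : x + a + 1 ≠ 0 := by
    rwa [Ne, CharTwo.add_eq_zero, CharTwo.add_eq_iff_eq_add, add_comm 1]
  rw [hG hxa0 hxa1, hG hx0 hx1, inv_add_mul_inv_eq_iff ha0 ha1 hx0 hxa0, mul_eq_zero,
    or_iff_right (mul_ne_zero hx0 hx1)]

theorem mul_sq_add_mul_add_eq_mul_mul {a r : F} (hr0 : r ≠ 0)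
    (hr : a * r ^ 2 + (a + 1) * r + a = 0) (x : F) :
    a * x ^ 2 + (a + 1) * x + a = a * (x + r) * (x + r⁻¹) := by
  have hsum : a + 1 = a * (r + r⁻¹) := by
    field_simp
    linear_combination hr - (a + a * r ^ 2) * CharTwo.two_eq_zero (R := F)
  rw [hsum]
  field_simp
  ring

theorem card_zero_one_self_inv [DecidableEq F] {r : F} (hr0 : r ≠ 0) (hr1 : r ≠ 1) :
    ({0, 1, r, r⁻¹} : Finset F).card = 4 := by
  have hrr : r ≠ r⁻¹ := fun h ↦ hr1 <| CharTwo.sq_inj.mp <| by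
    rw [one_pow, sq, ← mul_inv_cancel₀ hr0, ← h]
  simp [Finset.card_insert_of_notMem, *, hr0.symm, hr1.symm]

theorem cDDT_swappedInv_eq_four [Fintype F] [DecidableEq F] {n : ℕ}
    (hF : Fintype.card F = 2 ^ n) (hn : 2 ≤ n) {a r : F} (ha0 : a ≠ 0) (ha3 : a ^ 3 + 1 ≠ 0)
    (ha3' : a ^ 3 + a ^ 2 + 1 ≠ 0) (hr : a * r ^ 2 + (a + 1) * r + a = 0) (hr1 : r ≠ 1) :
    cDDT F n (a * (a + 1))⁻¹ a (a + 1)⁻¹ = 4 := by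
  have hr0 : r ≠ 0 := by rintro rfl; simp [ha0] at hr
  suffices h : univ.filter (fun x : F ↦
      swappedInv n (x + a) + (a * (a + 1))⁻¹ * swappedInv n x = (a + 1)⁻¹) = {0, 1, r, r⁻¹} by
    rw [cDDT, h, card_zero_one_self_inv hr0 hr1]
  ext x
  simp only [mem_filter, mem_univ, true_and, mem_insert, mem_singleton]
  rw [swappedInv_add_add_mul_swappedInv_eq_iff hF hn ha0 ha3 ha3',
    mul_sq_add_mul_add_eq_mul_mul hr0 hr]
  simp [CharTwo.add_eq_zero, ha0, or_assoc]

open Polynomial in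
theorem exists_root_of_fourteen_lt_card [Fintype F] (hF : 14 < Fintype.card F) :
    ∃ a r : F, a ≠ 0 ∧ a ^ 3 + 1 ≠ 0 ∧ a ^ 3 + a ^ 2 + 1 ≠ 0 ∧
      a * r ^ 2 + (a + 1) * r + a = 0 ∧ r ≠ 1 := by
  -- `a = r / (r ^ 2 + r + 1)` is the parameter for which `r` is a root; `P` vanishes at the `r`
  -- for which `r = 1` or the conditions on `a` fail.
  let P : F[X] := X * (X + 1) * (X ^ 2 + X + 1) * (X ^ 4 + X ^ 3 + X ^ 2 + X + 1) *
    (X ^ 3 + X + 1) * (X ^ 3 + X ^ 2 + 1)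
  have hP : P.Monic := by dsimp only [P]; monicity!
  have hdeg : P.natDegree = 14 := by dsimp only [P]; compute_degree!
  obtain ⟨r, hr⟩ := P.exists_eval_ne_zero_of_natDegree_lt_card hP.ne_zero <| by
    rw [hdeg, Cardinal.mk_fintype]
    exact_mod_cast hF
  simp only [P, eval_mul, eval_add, eval_pow, eval_X, eval_one, mul_ne_zero_iff] at hr
  obtain ⟨⟨⟨⟨⟨hr0, hr1⟩, hs⟩, hq⟩, h31⟩, h32⟩ := hr
  generalize hs_def : r ^ 2 + r + 1 = s at hs
  refine ⟨r / s, r, div_ne_zero hr0 hs, ?_, ?_, ?_, by rwa [Ne, ← CharTwo.add_eq_zero]⟩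
  · rw [show (r / s) ^ 3 + 1 = (r + 1) ^ 2 * (r ^ 4 + r ^ 3 + r ^ 2 + r + 1) / s ^ 3 by
      field_simp; rw [← hs_def]; ring_nf; reduce_mod_char!]
    exact div_ne_zero (mul_ne_zero (pow_ne_zero _ hr1) hq) (pow_ne_zero _ hs)
  · rw [show (r / s) ^ 3 + (r / s) ^ 2 + 1 = (r ^ 3 + r + 1) * (r ^ 3 + r ^ 2 + 1) / s ^ 3 by
      field_simp; rw [← hs_def]; ring_nf; reduce_mod_char!]
    exact div_ne_zero (mul_ne_zero h31 h32) (pow_ne_zero _ hs)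
  · field_simp
    rw [← hs_def]
    ring_nf
    reduce_mod_char!

end CharTwo

theorem stmt_5 (n : ℕ) (hn : 4 ≤ n) (F : Type*) [Field F] [Fintype F] [DecidableEq F]
    (hF : Fintype.card F = 2 ^ n) :
    ∃ c a b : F, c ≠ 0 ∧ c ≠ 1 ∧ cDDT F n c a b = 4 := by
  have := charP_two_of_card_eq_two_pow (by omega) hF
  have hcard : 14 < Fintype.card F := by
    rw [hF]
    calc 14 < 2 ^ 4 := by norm_num
      _ ≤ 2 ^ n := Nat.pow_le_pow_right two_pos hn
  obtain ⟨a, r, ha0, ha3, ha3', hr, hr1⟩ := exists_root_of_fourteen_lt_card hcard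
  refine ⟨(a * (a + 1))⁻¹, a, (a + 1)⁻¹, ?_, ?_,
    cDDT_swappedInv_eq_four hF (by omega) ha0 ha3 ha3' hr hr1⟩
  · have ha1 : a + 1 ≠ 0 := left_ne_zero_of_mul (pow_three_add_one_eq_mul a ▸ ha3)
    positivity
  · exact inv_mul_add_one_ne_one ha3
end

section
/- Let n ≥ 2 and let c ∈ F_{2^n} with c ≠ 0 and c ≠ 1, and let b ∈ F_{2^n} with b ∉ {0, 1, c} and b ≠ c + 1. If Tr(bc/(b+c+1)²) = 0, then the c-DDT entry of the (0,1)-swapped inverse function satisfies Δ_c(1, b) = 2: the two solutions of G(x+1) + c·G(x) = b are exactly the two roots of x² + ((b+c+1)/b)·x + c/b = 0. -/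
open Finset

section AS

variable {F : Type*} [Field F] [Fintype F] [DecidableEq F]

lemma char_two_of_card {n : ℕ} (hn : 1 ≤ n) (hF : Fintype.card F = 2 ^ n) : CharP F 2 := by
  have h2 : (2 : F) = 0 := by
    have h := FiniteField.cast_card_eq_zero F
    rw [hF] at h
    push_cast at h
    exact pow_eq_zero_iff (by omega) |>.mp h
  exact CharTwo.of_one_ne_zero_of_two_eq_zero one_ne_zero h2

lemma trF_add [CharP F 2] (n : ℕ) (x y : F) : trF n (x + y) = trF n x + trF n y := by
  simp only [trF, add_pow_char_pow, Finset.sum_add_distrib]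

lemma pow_card_self {n : ℕ} (hF : Fintype.card F = 2 ^ n) (x : F) : x ^ 2 ^ n = x := by
  rw [← hF]; exact FiniteField.pow_card x

lemma trF_sq_self [CharP F 2] {n : ℕ} (hF : Fintype.card F = 2 ^ n) (x : F) :
    trF n x ^ 2 = trF n x := by
  have h1 := Finset.sum_range_succ (fun i => x ^ (2 ^ i)) n
  have h2 := Finset.sum_range_succ' (fun i => x ^ (2 ^ i)) n
  have hx := pow_card_self hF x
  have : trF n x ^ 2 = ∑ i ∈ Finset.range n, x ^ 2 ^ (i + 1) := by
    rw [trF, CharTwo.sum_sq]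
    refine Finset.sum_congr rfl fun i _ => ?_
    rw [← pow_mul, pow_succ]
  rw [this, trF]
  have key : ∑ i ∈ Finset.range n, x ^ 2 ^ (i + 1) =
      (∑ i ∈ Finset.range n, x ^ 2 ^ i) + x ^ 2 ^ n - x ^ 2 ^ 0 := by
    rw [← h1, h2]; ring
  rw [key, hx, pow_zero, pow_one]
  rw [CharTwo.sub_eq_add, add_assoc, CharTwo.add_self_eq_zero, add_zero]

lemma trF_eq_zero_or_one [CharP F 2] {n : ℕ} (hF : Fintype.card F = 2 ^ n) (x : F) :
    trF n x = 0 ∨ trF n x = 1 := by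
  have h := trF_sq_self hF x
  have : trF n x * (trF n x - 1) = 0 := by ring_nf; linear_combination h
  rcases mul_eq_zero.mp this with h' | h'
  · exact Or.inl h'
  · exact Or.inr (sub_eq_zero.mp h')

lemma trF_artin [CharP F 2] {n : ℕ} (hF : Fintype.card F = 2 ^ n) (y : F) :
    trF n (y ^ 2 + y) = 0 := by
  have hy := pow_card_self hF y
  rw [trF_add]
  have : trF n (y ^ 2) = trF n y := by
    have h1 := Finset.sum_range_succ (fun i => y ^ (2 ^ i)) n
    have h2 := Finset.sum_range_succ' (fun i => y ^ (2 ^ i)) n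
    have : trF n (y ^ 2) = ∑ i ∈ Finset.range n, y ^ 2 ^ (i + 1) := by
      rw [trF]
      refine Finset.sum_congr rfl fun i _ => ?_
      rw [← pow_mul, pow_succ, mul_comm]
    rw [this]
    have key : ∑ i ∈ Finset.range n, y ^ 2 ^ (i + 1) =
        (∑ i ∈ Finset.range n, y ^ 2 ^ i) + y ^ 2 ^ n - y ^ 2 ^ 0 := by
      rw [← h1, h2]; ring
    rw [key, hy, pow_zero, pow_one, trF]
    rw [CharTwo.sub_eq_add, add_assoc, CharTwo.add_self_eq_zero, add_zero]
  rw [this, CharTwo.add_self_eq_zero]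

lemma trF_exists_one {n : ℕ} (hn : 1 ≤ n) (hF : Fintype.card F = 2 ^ n) :
    ∃ x : F, trF n x = 1 := by
  haveI : CharP F 2 := char_two_of_card hn hF
  by_contra h
  push_neg at h
  have hz : ∀ x : F, trF n x = 0 := fun x =>
    (trF_eq_zero_or_one hF x).resolve_right (h x)
  set P : Polynomial F := ∑ i ∈ Finset.range n, Polynomial.X ^ (2 ^ i) with hP
  have heval : ∀ x : F, P.eval x = 0 := by
    intro x
    have := hz x
    rw [trF] at this
    rw [hP, Polynomial.eval_finset_sum]
    simpa using this
  have hdeg : P.natDegree ≤ 2 ^ (n - 1) := by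
    refine Polynomial.natDegree_sum_le_of_forall_le _ _ fun i hi => ?_
    rw [Polynomial.natDegree_X_pow]
    exact Nat.pow_le_pow_right (by norm_num) (by simp at hi; omega)
  have hPzero : P = 0 := by
    apply Polynomial.eq_zero_of_natDegree_lt_card_of_eval_eq_zero P Function.injective_id
    · exact fun x => heval x
    · calc P.natDegree ≤ 2 ^ (n - 1) := hdeg
        _ < 2 ^ n := Nat.pow_lt_pow_right (by norm_num) (by omega)
        _ = Fintype.card F := hF.symm
  have hcoeff : P.coeff (2 ^ (n - 1)) = 1 := by
    rw [hP, Polynomial.finset_sum_coeff]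
    rw [Finset.sum_eq_single_of_mem (n - 1) (Finset.mem_range.mpr (by omega))]
    · simp [Polynomial.coeff_X_pow]
    · intro i hi hne
      rw [Polynomial.coeff_X_pow, if_neg]
      intro hcontra
      exact hne (Nat.pow_right_injective (by norm_num) hcontra).symm
  rw [hPzero] at hcoeff
  simp at hcoeff

lemma artin_schreier {n : ℕ} (hn : 1 ≤ n) (hF : Fintype.card F = 2 ^ n) (d : F)
    (htr : trF n d = 0) : ∃ y : F, y ^ 2 + y = d := by
  haveI : CharP F 2 := char_two_of_card hn hF
  obtain ⟨x₀, hx₀⟩ := trF_exists_one hn hF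
  classical
  set f : F → F := fun y => y ^ 2 + y with hf
  set S : Finset F := Finset.univ.image f with hS
  set T : Finset F := Finset.univ.filter (fun x => trF n x = 0) with hT
  have hST : S ⊆ T := by
    intro a ha
    rw [hS, Finset.mem_image] at ha
    obtain ⟨y, _, rfl⟩ := ha
    rw [hT, Finset.mem_filter]
    exact ⟨Finset.mem_univ _, trF_artin hF y⟩
  have hcardS : Fintype.card F = 2 * S.card := by
    have hfib : ∀ a ∈ Finset.univ.image f, (Finset.univ.filter (fun z => f z = a)).card = 2 := by
      intro a ha
      rw [Finset.mem_image] at ha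
      obtain ⟨y₀, _, rfl⟩ := ha
      have hset : Finset.univ.filter (fun z => f z = f y₀) = {y₀, y₀ + 1} := by
        ext z
        simp only [Finset.mem_filter, Finset.mem_univ, true_and, Finset.mem_insert,
          Finset.mem_singleton]
        constructor
        · intro hz
          have h2 : (2 : F) = 0 := CharTwo.two_eq_zero
          have hfac : (z + y₀) * (z + y₀ + 1) = 0 := by
            simp only [hf] at hz
            linear_combination hz + (z * y₀ + y₀ ^ 2 + y₀) * h2
          rcases mul_eq_zero.mp hfac with h' | h'
          · left; linear_combination h' - y₀ * h2
          · right; linear_combination h' - (y₀ + 1) * h2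
        · rintro (rfl | rfl)
          · rfl
          · simp only [hf]
            have h2 : (2 : F) = 0 := CharTwo.two_eq_zero
            linear_combination (y₀ + 1) * h2
      rw [hset, Finset.card_insert_of_notMem, Finset.card_singleton]
      simp only [Finset.mem_singleton]
      intro h
      have h2 : (2 : F) = 0 := CharTwo.two_eq_zero
      exact one_ne_zero (by linear_combination -h : (1 : F) = 0)
    rw [← Finset.card_univ, Finset.card_eq_sum_card_image f Finset.univ,
      Finset.sum_congr rfl hfib, Finset.sum_const, smul_eq_mul, mul_comm, hS]
  have hcardT : Fintype.card F = 2 * T.card := by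
    classical
    have hsplit := Finset.card_filter_add_card_filter_not
      (s := (Finset.univ : Finset F)) (fun x => trF n x = 0)
    have hneg : (Finset.univ : Finset F).filter (fun x => ¬ trF n x = 0) =
        (Finset.univ : Finset F).filter (fun x => trF n x = 1) := by
      apply Finset.filter_congr
      intro x _
      rcases trF_eq_zero_or_one hF x with h | h <;> simp [h]
    rw [hneg] at hsplit
    have hbij : ((Finset.univ : Finset F).filter (fun x => trF n x = 1)).card = T.card := by
      apply Finset.card_bij' (fun x _ => x + x₀) (fun x _ => x + x₀)
      · intro x hx
        simp only [Finset.mem_filter, Finset.mem_univ, true_and] at hx ⊢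
        rw [hT, Finset.mem_filter]
        refine ⟨Finset.mem_univ _, ?_⟩
        rw [trF_add, hx, hx₀, CharTwo.add_self_eq_zero]
      · intro x hx
        rw [hT, Finset.mem_filter] at hx
        simp only [Finset.mem_filter, Finset.mem_univ, true_and]
        rw [trF_add, hx.2, hx₀, zero_add]
      · intro x _
        rw [add_assoc, CharTwo.add_self_eq_zero, add_zero]
      · intro x _
        rw [add_assoc, CharTwo.add_self_eq_zero, add_zero]
    rw [hbij] at hsplit
    rw [← Finset.card_univ, ← hsplit, ← hT]
    ring
  have hScard_eq : S.card = T.card := by omega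
  have hSeqT : S = T := Finset.eq_of_subset_of_card_le hST (le_of_eq hScard_eq.symm)
  have hdT : d ∈ T := by rw [hT, Finset.mem_filter]; exact ⟨Finset.mem_univ _, htr⟩
  rw [← hSeqT, hS, Finset.mem_image] at hdT
  obtain ⟨y, _, hy⟩ := hdT
  exact ⟨y, hy⟩

end AS

theorem stmt_10 (n : ℕ) (hn : 2 ≤ n) (F : Type*) [Field F] [Fintype F] [DecidableEq F]
    (hF : Fintype.card F = 2 ^ n)
    (c : F) (hc0 : c ≠ 0) (hc1 : c ≠ 1)
    (b : F) (hb0 : b ≠ 0) (hb1 : b ≠ 1) (hbc : b ≠ c) (hbc1 : b ≠ c + 1)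
    (htr : trF n (b * c / (b + c + 1) ^ 2) = 0) :
    cDDT F n c 1 b = 2 ∧
      ∀ x : F, swappedInv n (x + 1) + c * swappedInv n x = b ↔
        x ^ 2 + ((b + c + 1) / b) * x + c / b = 0 := by
  have hn1 : 1 ≤ n := by omega
  haveI hchar : CharP F 2 := char_two_of_card hn1 hF
  have h2 : (2 : F) = 0 := CharTwo.two_eq_zero
  have hq4 : 4 ≤ 2 ^ n := by
    calc (4:ℕ) = 2 ^ 2 := rfl
      _ ≤ 2 ^ n := Nat.pow_le_pow_right (by norm_num) hn
  have hG0 : swappedInv n (0 : F) = 1 := by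
    rw [swappedInv, zero_pow (by omega : 2^n - 2 ≠ 0), zero_pow (by omega : 2^n - 1 ≠ 0),
      zero_add, zero_add, zero_add, one_pow]
  have hG1 : swappedInv n (1 : F) = 0 := by
    rw [swappedInv, one_pow, one_pow, CharTwo.add_self_eq_zero (1:F),
      zero_pow (by omega : 2^n - 1 ≠ 0), add_zero]
  have hbc1' : b + c + 1 ≠ 0 := by
    intro h; exact hbc1 (by linear_combination h - (c + 1) * h2)
  have hGgen : ∀ x : F, x ≠ 0 → x ≠ 1 → swappedInv n x = x⁻¹ := by
    intro x hx0 hx1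
    have hx1' : x + 1 ≠ 0 := by
      intro h; exact hx1 (by linear_combination h - h2)
    have hpow1 : x ^ (2 ^ n - 1) = 1 := by
      have := FiniteField.pow_card_sub_one_eq_one x hx0; rwa [hF] at this
    have hpow2 : (x + 1) ^ (2 ^ n - 1) = 1 := by
      have := FiniteField.pow_card_sub_one_eq_one (x + 1) hx1'; rwa [hF] at this
    have hpow3 : x ^ (2 ^ n - 2) = x⁻¹ := by
      have hm : x ^ (2 ^ n - 2) * x = 1 := by
        rw [← pow_succ, (by omega : 2 ^ n - 2 + 1 = 2 ^ n - 1), hpow1]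
      exact (inv_eq_of_mul_eq_one_left hm).symm
    rw [swappedInv, hpow1, hpow2, hpow3, add_assoc, CharTwo.add_self_eq_zero, add_zero]
  have hiff : ∀ x : F, swappedInv n (x + 1) + c * swappedInv n x = b ↔
      x ^ 2 + ((b + c + 1) / b) * x + c / b = 0 := by
    intro x
    by_cases hx0 : x = 0
    · subst hx0
      rw [zero_add, hG1, hG0, mul_one, zero_add]
      constructor
      · intro h; exact absurd h.symm hbc
      · intro h
        exfalso
        have : c / b = 0 := by linear_combination h
        exact hc0 ((div_eq_zero_iff.mp this).resolve_right hb0)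
    · by_cases hx1 : x = 1
      · subst hx1
        rw [CharTwo.add_self_eq_zero (1:F), hG0, hG1, mul_zero, add_zero]
        constructor
        · intro h; exact absurd h.symm hb1
        · intro h
          exfalso
          field_simp at h
          exact one_ne_zero (by linear_combination h - (b + c) * h2 : (1:F) = 0)
      · have hx1' : x + 1 ≠ 0 := by
          intro h; exact hx1 (by linear_combination h - h2)
        have hx1'' : x + 1 ≠ 1 := by
          intro h; exact hx0 (by linear_combination h)
        rw [hGgen (x + 1) hx1' hx1'', hGgen x hx0 hx1]
        constructor
        · intro h
          field_simp at h ⊢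
          linear_combination h + (x * b + x ^ 2 * b) * h2
        · intro h
          field_simp at h ⊢
          linear_combination h - (x * b + x ^ 2 * b) * h2
  refine ⟨?_, hiff⟩
  obtain ⟨y, hy⟩ := artin_schreier hn1 hF _ htr
  set A : F := (b + c + 1) / b with hA
  have hAne : A ≠ 0 := div_ne_zero hbc1' hb0
  set x₀ : F := A * y with hx₀
  have hAd : A ^ 2 * (b * c / (b + c + 1) ^ 2) = c / b := by
    rw [hA]; field_simp
  have r₀ : x₀ ^ 2 + A * x₀ + c / b = 0 := by
    rw [hx₀]
    linear_combination A ^ 2 * hy + hAd + (c / b) * h2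
  have key : ∀ z : F, z ^ 2 + A * z + c / b = 0 ↔ z = x₀ ∨ z = x₀ + A := by
    intro z
    constructor
    · intro hz
      have hfac : (z + x₀) * (z + x₀ + A) = 0 := by
        linear_combination hz + r₀ + (z * x₀ - c / b) * h2
      rcases mul_eq_zero.mp hfac with h' | h'
      · left; linear_combination h' - x₀ * h2
      · right; linear_combination h' - (x₀ + A) * h2
    · rintro (rfl | rfl)
      · exact r₀
      · linear_combination r₀ + (A * x₀ + A ^ 2) * h2
  rw [cDDT]
  have hset : univ.filter (fun x : F => swappedInv n (x + 1) + c * swappedInv n x = b)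
      = {x₀, x₀ + A} := by
    ext z
    simp only [Finset.mem_filter, Finset.mem_univ, true_and, Finset.mem_insert,
      Finset.mem_singleton]
    rw [hiff z]
    exact key z
  rw [hset, Finset.card_pair]
  intro h
  exact hAne (by linear_combination -h)
end
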